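/- Let K be a nonempty finite type and, for each κ ∈ K, let I κ and J κ be nonempty finite types; set Ω = Σ κ, (I κ × J κ). Let ρ : Matrix Ω Ω ℂ be positive semidefinite with trace 1. Then ρ is block-separable if and only if both: (a) ρ is block diagonal, i.e. ρ (⟨κ,a⟩, ⟨κ',b⟩) = 0 whenever κ ≠ κ'; and (b) for each κ with p_κ := ∑_{a ∈ I κ × J κ} ρ (⟨κ,a⟩, ⟨κ,a⟩) ≠ 0, the normalized diagonal block ρ_κ : Matrix (I κ × J κ) (I κ × J κ) ℂ, ρ_κ (a, b) = ρ (⟨κ,a⟩, ⟨κ,b⟩) / p_κ, is a finite convex combination ∑_t λ_t (A_t ⊗ₖ B_t) of Kronecker products of positive semidefinite trace-1 matrices A_t on I κ and B_t on J κ. -/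

import Mathlib

open scoped BigOperators ComplexOrder Kronecker

/-- A matrix on `Ω = Σ κ, I κ × J κ` is block-separable if it is a finite convex
combination of rank-one projections onto unit vectors each supported in a single
block and there of product form. -/
def BlockSep {K : Type*} [Fintype K] {I J : K → Type*}
    [∀ κ, Fintype (I κ)] [∀ κ, Fintype (J κ)]
    (ρ : Matrix ((κ : K) × (I κ × J κ)) ((κ : K) × (I κ × J κ)) ℂ) : Prop :=
  ∃ (n : ℕ) (lam : Fin n → ℝ) (v : Fin n → ((κ : K) × (I κ × J κ)) → ℂ),
    (∀ t, 0 ≤ lam t) ∧ (∑ t, lam t = 1) ∧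
    (∀ t, ∑ a, Complex.normSq (v t a) = 1) ∧
    (∀ t, ∃ (κ : K) (x : I κ → ℂ) (y : J κ → ℂ),
      (∀ (i : I κ) (j : J κ), v t ⟨κ, (i, j)⟩ = x i * y j) ∧
      (∀ κ' : K, κ' ≠ κ → ∀ b : I κ' × J κ', v t ⟨κ', b⟩ = 0)) ∧
    ρ = ∑ t, (lam t : ℂ) • Matrix.of (fun a b => v t a * starRingEnd ℂ (v t b))

/-- A matrix on `I × J` is Kronecker-separable if it is a finite convex combination
of Kronecker products of positive semidefinite trace-one matrices. -/
def KronSep {I J : Type*} [Fintype I] [Fintype J]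
    (ρ : Matrix (I × J) (I × J) ℂ) : Prop :=
  ∃ (n : ℕ) (lam : Fin n → ℝ)
    (A : Fin n → Matrix I I ℂ) (B : Fin n → Matrix J J ℂ),
    (∀ t, 0 ≤ lam t) ∧ (∑ t, lam t = 1) ∧
    (∀ t, (A t).PosSemidef ∧ (A t).trace = 1) ∧
    (∀ t, (B t).PosSemidef ∧ (B t).trace = 1) ∧
    ρ = ∑ t, (lam t : ℂ) • (A t ⊗ₖ B t)

/-!
A trace-one element of the cone generated by a set of trace-one matrices lies in the convex hull
of that set, since the trace reads off the total weight. So `ρ` is block-separable iff it lies in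
the cone generated by the projections onto block-product vectors, and a normalized block is
separable iff the block lies in the cone generated by Kronecker products of positive semidefinite
matrices. The projection onto a block-product vector is block diagonal, and each of its diagonal
blocks is `x xᴴ ⊗ y yᴴ` for some `x`, `y`; this gives the forward direction. Conversely, a
block-diagonal `ρ` is the sum of its diagonal blocks, and writing the Kronecker factors as sums of
rank-one projections turns each separable block into a sum of projections onto product vectors.
-/

open Matrix

section Cones

variable {E F : Type*} [AddCommGroup E] [Module ℝ E] [AddCommGroup F] [Module ℝ F]

theorem PointedCone.convexHull_subset_hull (S : Set E) :
    convexHull ℝ S ⊆ PointedCone.hull ℝ S :=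
  convexHull_min PointedCone.subset_hull (PointedCone.convex _)

theorem PointedCone.mem_hull_of_isLinearMap {f : E → F} (hf : IsLinearMap ℝ f) {s : Set E}
    {t : Set F} (hst : ∀ x ∈ s, f x ∈ PointedCone.hull ℝ t) {x : E}
    (hx : x ∈ PointedCone.hull ℝ s) : f x ∈ PointedCone.hull ℝ t :=
  PointedCone.mem_comap.mp
    ((Submodule.span_le (p := (PointedCone.hull ℝ t).comap (hf.mk' f))).mpr hst hx)

theorem PointedCone.mem_convexHull_of_mem_hull [Module.IsTorsionFree ℝ F] {S : Set E}
    {f : E →ₗ[ℝ] F} {c : F} (hc : c ≠ 0) (hS : ∀ y ∈ S, f y = c) {x : E}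
    (hx : x ∈ PointedCone.hull ℝ S) (hfx : f x = c) : x ∈ convexHull ℝ S := by
  obtain ⟨n, w, y, rfl⟩ := Submodule.mem_span_set'.mp hx
  have hw : ∑ i, (w i : ℝ) = 1 := by
    refine smul_left_injective ℝ hc ?_
    have hy : ∀ i, f (y i) = c := fun i => hS _ (y i).2
    simpa [hy, NNReal.smul_def, Finset.sum_smul] using hfx
  exact (convex_convexHull ℝ S).sum_mem (fun i _ => (w i).2) hw
    fun i _ => subset_convexHull ℝ S (y i).2

theorem mem_convexHull_iff_exists_fin {s : Set E} {x : E} :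
    x ∈ convexHull ℝ s ↔ ∃ (n : ℕ) (w : Fin n → ℝ) (z : Fin n → E),
      (∀ i, 0 ≤ w i) ∧ ∑ i, w i = 1 ∧ (∀ i, z i ∈ s) ∧ ∑ i, w i • z i = x := by
  refine ⟨fun hx => ?_, fun ⟨n, w, z, hw, h1, hz, hx⟩ =>
    mem_convexHull_of_exists_fintype w z hw h1 hz hx⟩
  obtain ⟨ι, _, w, z, hw, h1, hz, rfl⟩ := mem_convexHull_iff_exists_fintype.mp hx
  let e := (Fintype.equivFin ι).symm
  exact ⟨Fintype.card ι, w ∘ e, z ∘ e, fun i => hw _, (e.sum_comp w).trans h1, fun i => hz _,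
    e.sum_comp fun i => w i • z i⟩

end Cones

section DensityMatrices

variable {l m n : Type*}

def densityMatrices (n : Type*) [Fintype n] : Set (Matrix n n ℂ) :=
  {A | A.PosSemidef ∧ A.trace = 1}

def productDensityMatrices (m n : Type*) [Fintype m] [Fintype n] :
    Set (Matrix (m × n) (m × n) ℂ) :=
  Set.image2 (· ⊗ₖ ·) (densityMatrices m) (densityMatrices n)

def rankOneKroneckerProducts (m n : Type*) : Set (Matrix (m × n) (m × n) ℂ) :=
  Set.image2 (· ⊗ₖ ·) (Set.range fun x : m → ℂ => vecMulVec x (star x))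
    (Set.range fun y : n → ℂ => vecMulVec y (star y))

theorem trace_eq_one_of_mem_productDensityMatrices [Fintype m] [Fintype n]
    {M : Matrix (m × n) (m × n) ℂ} (hM : M ∈ productDensityMatrices m n) : M.trace = 1 := by
  obtain ⟨A, hA, B, hB, rfl⟩ := hM
  rw [trace_kronecker, hA.2, hB.2, one_mul]

theorem mem_convexHull_of_mem_hull_of_trace_eq_one [Fintype n] {S : Set (Matrix n n ℂ)}
    (hS : ∀ A ∈ S, A.trace = 1) {M : Matrix n n ℂ} (hM : M ∈ PointedCone.hull ℝ S)
    (htr : M.trace = 1) : M ∈ convexHull ℝ S :=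
  PointedCone.mem_convexHull_of_mem_hull (f := traceLinearMap n ℝ ℂ) one_ne_zero hS hM htr

theorem Matrix.PosSemidef.exists_trace_eq_ofReal [Fintype n] {A : Matrix n n ℂ}
    (hA : A.PosSemidef) : ∃ r : ℝ, 0 ≤ r ∧ A.trace = r := by
  obtain ⟨r, hr, h⟩ := RCLike.nonneg_iff_exists_ofReal.mp hA.trace_nonneg
  exact ⟨r, hr, h.symm⟩

theorem Matrix.PosSemidef.mem_hull_densityMatrices [Fintype n] {A : Matrix n n ℂ}
    (hA : A.PosSemidef) : A ∈ PointedCone.hull ℝ (densityMatrices n) := by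
  obtain ⟨r, hr, htr⟩ := hA.exists_trace_eq_ofReal
  rcases hr.eq_or_lt with rfl | hr
  · simp [(hA.trace_eq_zero_iff).mp (by simpa using htr)]
  have hnorm : r⁻¹ • A ∈ densityMatrices n := by
    refine ⟨hA.smul (inv_nonneg.mpr hr.le), ?_⟩
    rw [trace_smul, htr, Complex.real_smul, ← Complex.ofReal_mul, inv_mul_cancel₀ hr.ne',
      Complex.ofReal_one]
  simpa [smul_smul, mul_inv_cancel₀ hr.ne'] using
    PointedCone.smul_mem _ hr.le (PointedCone.subset_hull hnorm)

theorem Matrix.kronecker_mem_hull_image2 {s : Set (Matrix l l ℂ)} {t : Set (Matrix m m ℂ)}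
    {A : Matrix l l ℂ} {B : Matrix m m ℂ} (hA : A ∈ PointedCone.hull ℝ s)
    (hB : B ∈ PointedCone.hull ℝ t) :
    A ⊗ₖ B ∈ PointedCone.hull ℝ (Set.image2 (· ⊗ₖ ·) s t) := by
  have hleft : ∀ B ∈ t, A ⊗ₖ B ∈ PointedCone.hull ℝ (Set.image2 (· ⊗ₖ ·) s t) := fun B hB =>
    PointedCone.mem_hull_of_isLinearMap (f := (· ⊗ₖ B))
      ⟨fun _ _ => add_kronecker _ _ _, fun _ _ => smul_kronecker _ _ _⟩
      (fun A hA => PointedCone.subset_hull (Set.mem_image2_of_mem hA hB)) hA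
  exact PointedCone.mem_hull_of_isLinearMap (f := (A ⊗ₖ ·))
    ⟨fun _ _ => kronecker_add _ _ _, fun _ _ => kronecker_smul _ _ _⟩ hleft hB

theorem Matrix.PosSemidef.kronecker_mem_hull_productDensityMatrices [Fintype m] [Fintype n]
    {A : Matrix m m ℂ} {B : Matrix n n ℂ} (hA : A.PosSemidef) (hB : B.PosSemidef) :
    A ⊗ₖ B ∈ PointedCone.hull ℝ (productDensityMatrices m n) :=
  kronecker_mem_hull_image2 hA.mem_hull_densityMatrices hB.mem_hull_densityMatrices

theorem Matrix.PosSemidef.mem_hull_vecMulVec [Fintype n] {A : Matrix n n ℂ} (hA : A.PosSemidef) :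
    A ∈ PointedCone.hull ℝ (Set.range fun v : n → ℂ => vecMulVec v (star v)) := by
  obtain ⟨k, v, rfl⟩ := posSemidef_iff_eq_sum_vecMulVec.mp hA
  exact Submodule.sum_mem _ fun i _ => PointedCone.subset_hull ⟨v i, rfl⟩

theorem productDensityMatrices_subset_hull_rankOneKroneckerProducts [Fintype m] [Fintype n] :
    productDensityMatrices m n ⊆ PointedCone.hull ℝ (rankOneKroneckerProducts m n) := by
  rintro _ ⟨A, hA, B, hB, rfl⟩
  exact kronecker_mem_hull_image2 hA.1.mem_hull_vecMulVec hB.1.mem_hull_vecMulVec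

theorem Matrix.vecMulVec_star_kronecker_vecMulVec_star (x : m → ℂ) (y : n → ℂ) :
    vecMulVec x (star x) ⊗ₖ vecMulVec y (star y) =
      vecMulVec (fun p : m × n => x p.1 * y p.2) (star fun p : m × n => x p.1 * y p.2) := by
  ext
  simp only [kroneckerMap_apply, vecMulVec_apply, Pi.star_apply, star_mul']
  ring

theorem Matrix.of_div_trace_eq_smul [Fintype n] (M : Matrix n n ℂ) :
    (Matrix.of fun a b => M a b / M.trace) = M.trace⁻¹ • M := by
  ext
  simp [div_eq_inv_mul]

theorem kronSep_iff_mem_convexHull [Fintype m] [Fintype n] {σ : Matrix (m × n) (m × n) ℂ} :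
    KronSep σ ↔ σ ∈ convexHull ℝ (productDensityMatrices m n) := by
  rw [mem_convexHull_iff_exists_fin]
  constructor
  · rintro ⟨k, lam, A, B, hlam, h1, hA, hB, rfl⟩
    exact ⟨k, lam, fun t => A t ⊗ₖ B t, hlam, h1, fun t => ⟨A t, hA t, B t, hB t, rfl⟩,
      by simp only [Complex.coe_smul]⟩
  · rintro ⟨k, lam, z, hlam, h1, hz, rfl⟩
    choose A hA B hB hAB using hz
    exact ⟨k, lam, A, B, hlam, h1, hA, hB, by simp only [hAB, Complex.coe_smul]⟩

theorem kronSep_of_mem_hull [Fintype m] [Fintype n]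
    {M : Matrix (m × n) (m × n) ℂ} (hM : M.PosSemidef)
    (hhull : M ∈ PointedCone.hull ℝ (productDensityMatrices m n)) (htr : M.trace ≠ 0) :
    KronSep (Matrix.of fun a b => M a b / M.trace) := by
  obtain ⟨r, hr, hMr⟩ := hM.exists_trace_eq_ofReal
  rw [kronSep_iff_mem_convexHull, of_div_trace_eq_smul]
  refine mem_convexHull_of_mem_hull_of_trace_eq_one
    (fun _ => trace_eq_one_of_mem_productDensityMatrices) ?_ ?_
  · rw [hMr, ← Complex.ofReal_inv, Complex.coe_smul]
    exact PointedCone.smul_mem _ (inv_nonneg.mpr hr) hhull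
  · rw [trace_smul, smul_eq_mul, inv_mul_cancel₀ htr]

theorem mem_hull_of_kronSep [Fintype m] [Fintype n]
    {M : Matrix (m × n) (m × n) ℂ} (hM : M.PosSemidef)
    (hsep : M.trace ≠ 0 → KronSep (Matrix.of fun a b => M a b / M.trace)) :
    M ∈ PointedCone.hull ℝ (rankOneKroneckerProducts m n) := by
  obtain ⟨r, hr, hMr⟩ := hM.exists_trace_eq_ofReal
  rcases hr.eq_or_lt with rfl | hr
  · simp [hM.trace_eq_zero_iff.mp (by simpa using hMr)]
  have htr : M.trace ≠ 0 := by rw [hMr]; exact_mod_cast hr.ne'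
  have hnorm := PointedCone.convexHull_subset_hull _ (kronSep_iff_mem_convexHull.mp (hsep htr))
  rw [of_div_trace_eq_smul, hMr, ← Complex.ofReal_inv, Complex.coe_smul] at hnorm
  simpa [smul_smul, mul_inv_cancel₀ hr.ne'] using PointedCone.smul_mem _ hr.le
    (Submodule.span_le.mpr productDensityMatrices_subset_hull_rankOneKroneckerProducts hnorm)

end DensityMatrices

section RankOne

variable {n : Type*}

theorem Matrix.vecMulVec_real_smul_self_star (c : ℝ) (v : n → ℂ) :
    vecMulVec (c • v) (star (c • v)) = (c * c) • vecMulVec v (star v) := by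
  rw [star_smul, star_trivial, smul_vecMulVec, vecMulVec_smul, smul_smul]

theorem vecMulVec_self_star_mem_hull_unitVectors [Fintype n] {V : Set (n → ℂ)}
    (hV : ∀ v ∈ V, ∀ c : ℝ, c • v ∈ V) {v : n → ℂ} (hv : v ∈ V) :
    vecMulVec v (star v) ∈ PointedCone.hull ℝ
      ((fun u => vecMulVec u (star u)) '' {u ∈ V | ∑ i, Complex.normSq (u i) = 1}) := by
  set N := ∑ i, Complex.normSq (v i) with hN
  have hN0 : 0 ≤ N := Finset.sum_nonneg fun i _ => Complex.normSq_nonneg (v i)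
  rcases hN0.eq_or_lt with h0 | hpos
  · have hv0 : v = 0 := funext fun i => Complex.normSq_eq_zero.mp <|
      (Finset.sum_eq_zero_iff_of_nonneg fun i _ => Complex.normSq_nonneg (v i)).mp h0.symm i
        (Finset.mem_univ i)
    simp [hv0]
  set c := (Real.sqrt N)⁻¹
  have hc : c * c = N⁻¹ := by rw [← mul_inv, Real.mul_self_sqrt hpos.le]
  have hunit : ∑ i, Complex.normSq ((c • v) i) = 1 := by
    simp only [Pi.smul_apply, Complex.real_smul, Complex.normSq_mul, Complex.normSq_ofReal, hc,
      ← Finset.mul_sum, ← hN]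
    exact inv_mul_cancel₀ hpos.ne'
  have := PointedCone.smul_mem _ hpos.le
    (PointedCone.subset_hull (R := ℝ) (Set.mem_image_of_mem (fun u => vecMulVec u (star u))
      (show c • v ∈ {u ∈ V | ∑ i, Complex.normSq (u i) = 1} from ⟨hV v hv c, hunit⟩)))
  simpa [vecMulVec_real_smul_self_star, hc, smul_smul, mul_inv_cancel₀ hpos.ne'] using this

theorem Matrix.trace_vecMulVec_star [Fintype n] (v : n → ℂ) :
    (vecMulVec v (star v)).trace = ((∑ i, Complex.normSq (v i) : ℝ) : ℂ) := by
  simp [trace, vecMulVec_apply, Complex.mul_conj]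

end RankOne

section Blocks

variable {K : Type*} {X : K → Type*} {I J : K → Type*}

def Matrix.IsBlockDiagonal' {α : Type*} [Zero α]
    (M : Matrix ((κ : K) × X κ) ((κ : K) × X κ) α) : Prop :=
  ∀ (κ κ' : K) (a : X κ) (b : X κ'), κ ≠ κ' → M ⟨κ, a⟩ ⟨κ', b⟩ = 0

theorem Matrix.convex_setOf_isBlockDiagonal' :
    Convex ℝ {M : Matrix ((κ : K) × X κ) ((κ : K) × X κ) ℂ | M.IsBlockDiagonal'} := by
  intro M hM N hN a b _ _ _ κ κ' x y hne
  simp [hM κ κ' x y hne, hN κ κ' x y hne]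

theorem Matrix.IsBlockDiagonal'.eq_sum_blockDiagonal'_single [Fintype K] [DecidableEq K]
    {M : Matrix ((κ : K) × X κ) ((κ : K) × X κ) ℂ} (hM : M.IsBlockDiagonal') :
    M = ∑ κ, blockDiagonal' (Pi.single κ (blockDiag' M κ)) := by
  have hsum :
      ∑ κ, blockDiagonal' (Pi.single κ (blockDiag' M κ)) = blockDiagonal' (blockDiag' M) := by
    simp_rw [← blockDiagonal'AddMonoidHom_apply, ← map_sum, Finset.univ_sum_single]
  rw [hsum]
  ext ⟨κ, a⟩ ⟨κ', b⟩
  by_cases h : κ = κ'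
  · subst h
    simp [blockDiagonal'_apply_eq, blockDiag'_apply]
  · simp [blockDiagonal'_apply_ne _ _ _ h, hM κ κ' a b h]

def blockVector [DecidableEq K] (κ : K) (w : X κ → ℂ) : ((κ : K) × X κ) → ℂ :=
  fun a => (Pi.single κ w : ∀ κ, X κ → ℂ) a.1 a.2

theorem blockVector_same [DecidableEq K] (κ : K) (w : X κ → ℂ) (a : X κ) :
    blockVector κ w ⟨κ, a⟩ = w a := by
  simp [blockVector]

theorem blockVector_of_ne [DecidableEq K] {κ κ' : K} (h : κ' ≠ κ) (w : X κ → ℂ) (a : X κ') :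
    blockVector κ w ⟨κ', a⟩ = 0 := by
  simp [blockVector, h]

theorem Matrix.blockDiagonal'_single_vecMulVec_star [DecidableEq K] (κ : K) (w : X κ → ℂ) :
    blockDiagonal' (Pi.single κ (vecMulVec w (star w))) =
      vecMulVec (blockVector κ w) (star (blockVector κ w)) := by
  ext ⟨κ₁, a⟩ ⟨κ₂, b⟩
  by_cases h₁ : κ₁ = κ
  · subst h₁
    by_cases h₂ : κ₂ = κ₁
    · subst h₂
      simp [blockDiagonal'_apply_eq, vecMulVec_apply, blockVector_same]
    · simp [blockDiagonal'_apply_ne _ _ _ (Ne.symm h₂), vecMulVec_apply, blockVector_of_ne h₂]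
  · by_cases h₂ : κ₂ = κ₁
    · subst h₂
      simp [blockDiagonal'_apply_eq, vecMulVec_apply, blockVector_of_ne h₁, h₁]
    · simp [blockDiagonal'_apply_ne _ _ _ (Ne.symm h₂), vecMulVec_apply, blockVector_of_ne h₁]

def IsBlockProduct (v : ((κ : K) × (I κ × J κ)) → ℂ) : Prop :=
  ∃ (κ : K) (x : I κ → ℂ) (y : J κ → ℂ),
    (∀ (i : I κ) (j : J κ), v ⟨κ, (i, j)⟩ = x i * y j) ∧
    ∀ κ' : K, κ' ≠ κ → ∀ b : I κ' × J κ', v ⟨κ', b⟩ = 0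

theorem IsBlockProduct.smul {v : ((κ : K) × (I κ × J κ)) → ℂ} (hv : IsBlockProduct v) (c : ℝ) :
    IsBlockProduct (c • v) := by
  obtain ⟨κ, x, y, hxy, hz⟩ := hv
  exact ⟨κ, c • x, y, fun i j => by simp [hxy, mul_assoc], fun κ' h b => by simp [hz κ' h b]⟩

theorem IsBlockProduct.exists_apply_eq {v : ((κ : K) × (I κ × J κ)) → ℂ} (hv : IsBlockProduct v)
    (κ : K) : ∃ (x : I κ → ℂ) (y : J κ → ℂ), ∀ i j, v ⟨κ, (i, j)⟩ = x i * y j := by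
  obtain ⟨κ₀, x, y, hxy, hz⟩ := hv
  by_cases h : κ = κ₀
  · subst h
    exact ⟨x, y, hxy⟩
  · exact ⟨0, 0, fun i j => by simp [hz κ h]⟩

theorem IsBlockProduct.isBlockDiagonal'_vecMulVec {v : ((κ : K) × (I κ × J κ)) → ℂ}
    (hv : IsBlockProduct v) : (vecMulVec v (star v)).IsBlockDiagonal' := by
  obtain ⟨κ₀, x, y, -, hz⟩ := hv
  intro κ κ' a b hne
  by_cases h : κ = κ₀
  · subst h
    simp [vecMulVec_apply, hz κ' (Ne.symm hne) b]
  · simp [vecMulVec_apply, hz κ h a]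

theorem isBlockProduct_blockVector [DecidableEq K] (κ : K) (x : I κ → ℂ) (y : J κ → ℂ) :
    IsBlockProduct (blockVector κ fun p : I κ × J κ => x p.1 * y p.2) :=
  ⟨κ, x, y, fun _ _ => blockVector_same _ _ _,
    fun _ h _ => blockVector_of_ne (X := fun κ => I κ × J κ) h _ _⟩

end Blocks

section BlockSeparability

variable {K : Type*} [Fintype K] {I J : K → Type*} [∀ κ, Fintype (I κ)] [∀ κ, Fintype (J κ)]

def pureBlockProductStates (I J : K → Type*) [∀ κ, Fintype (I κ)] [∀ κ, Fintype (J κ)] :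
    Set (Matrix ((κ : K) × (I κ × J κ)) ((κ : K) × (I κ × J κ)) ℂ) :=
  (fun u => vecMulVec u (star u)) '' {u | IsBlockProduct u ∧ ∑ a, Complex.normSq (u a) = 1}

theorem trace_eq_one_of_mem_pureBlockProductStates
    {M : Matrix ((κ : K) × (I κ × J κ)) ((κ : K) × (I κ × J κ)) ℂ}
    (hM : M ∈ pureBlockProductStates I J) : M.trace = 1 := by
  obtain ⟨v, ⟨-, hv⟩, rfl⟩ := hM
  rw [trace_vecMulVec_star, hv, Complex.ofReal_one]

theorem blockSep_iff_mem_convexHull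
    {ρ : Matrix ((κ : K) × (I κ × J κ)) ((κ : K) × (I κ × J κ)) ℂ} :
    BlockSep ρ ↔ ρ ∈ convexHull ℝ (pureBlockProductStates I J) := by
  rw [mem_convexHull_iff_exists_fin]
  constructor
  · rintro ⟨k, lam, v, hlam, h1, hnorm, hprod, rfl⟩
    exact ⟨k, lam, fun t => vecMulVec (v t) (star (v t)), hlam, h1,
      fun t => ⟨v t, ⟨hprod t, hnorm t⟩, rfl⟩, by simp only [Complex.coe_smul]; rfl⟩
  · rintro ⟨k, lam, z, hlam, h1, hz, rfl⟩
    choose v hv hvz using hz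
    exact ⟨k, lam, v, hlam, h1, fun t => (hv t).2, fun t => (hv t).1,
      by simp only [← hvz, Complex.coe_smul]; rfl⟩

theorem isBlockDiagonal'_of_mem_convexHull
    {ρ : Matrix ((κ : K) × (I κ × J κ)) ((κ : K) × (I κ × J κ)) ℂ}
    (hρ : ρ ∈ convexHull ℝ (pureBlockProductStates I J)) : ρ.IsBlockDiagonal' := by
  refine convexHull_min ?_ convex_setOf_isBlockDiagonal' hρ
  rintro _ ⟨v, ⟨hv, -⟩, rfl⟩
  exact hv.isBlockDiagonal'_vecMulVec

theorem blockDiag'_mem_hull_productDensityMatrices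
    {ρ : Matrix ((κ : K) × (I κ × J κ)) ((κ : K) × (I κ × J κ)) ℂ}
    (hρ : ρ ∈ PointedCone.hull ℝ (pureBlockProductStates I J)) (κ : K) :
    blockDiag' ρ κ ∈ PointedCone.hull ℝ (productDensityMatrices (I κ) (J κ)) := by
  refine PointedCone.mem_hull_of_isLinearMap (f := fun M => blockDiag' M κ)
    ⟨fun M N => by simp [blockDiag'_add], fun c M => by simp [blockDiag'_smul]⟩ ?_ hρ
  rintro _ ⟨v, ⟨hv, -⟩, rfl⟩
  obtain ⟨x, y, hxy⟩ := hv.exists_apply_eq κ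
  have hblock : blockDiag' (vecMulVec v (star v)) κ =
      vecMulVec x (star x) ⊗ₖ vecMulVec y (star y) := by
    rw [vecMulVec_star_kronecker_vecMulVec_star, ← funext fun p : I κ × J κ => hxy p.1 p.2]
    rfl
  rw [hblock]
  exact (posSemidef_vecMulVec_self_star x).kronecker_mem_hull_productDensityMatrices
    (posSemidef_vecMulVec_self_star y)

theorem mem_hull_pureBlockProductStates [DecidableEq K]
    {ρ : Matrix ((κ : K) × (I κ × J κ)) ((κ : K) × (I κ × J κ)) ℂ} (hρ : ρ.IsBlockDiagonal')
    (hblocks : ∀ κ, blockDiag' ρ κ ∈ PointedCone.hull ℝ (rankOneKroneckerProducts (I κ) (J κ))) :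
    ρ ∈ PointedCone.hull ℝ (pureBlockProductStates I J) := by
  rw [hρ.eq_sum_blockDiagonal'_single]
  refine Submodule.sum_mem _ fun κ _ => PointedCone.mem_hull_of_isLinearMap
    (f := fun M => blockDiagonal' (Pi.single κ M))
    ⟨fun M N => by simp [Pi.single_add, blockDiagonal'_add],
      fun c M => by simp [Pi.single_smul, blockDiagonal'_smul]⟩ ?_ (hblocks κ)
  rintro _ ⟨_, ⟨x, rfl⟩, _, ⟨y, rfl⟩, rfl⟩
  dsimp only
  rw [vecMulVec_star_kronecker_vecMulVec_star, blockDiagonal'_single_vecMulVec_star]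
  exact vecMulVec_self_star_mem_hull_unitVectors (V := {v | IsBlockProduct v})
    (fun _ hv c => hv.smul c) (isBlockProduct_blockVector κ x y)

end BlockSeparability

theorem block_separability_characterization
    {K : Type*} [Fintype K] {I J : K → Type*}
    [∀ κ, Fintype (I κ)] [∀ κ, Fintype (J κ)]
    (ρ : Matrix ((κ : K) × (I κ × J κ)) ((κ : K) × (I κ × J κ)) ℂ)
    (hpsd : ρ.PosSemidef) (htr : ρ.trace = 1) :
    BlockSep ρ ↔
      ((∀ (κ κ' : K) (a : I κ × J κ) (b : I κ' × J κ'),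
          κ ≠ κ' → ρ ⟨κ, a⟩ ⟨κ', b⟩ = 0) ∧
        ∀ κ : K, (∑ a : I κ × J κ, ρ ⟨κ, a⟩ ⟨κ, a⟩) ≠ 0 →
          KronSep (Matrix.of fun a b : I κ × J κ =>
            ρ ⟨κ, a⟩ ⟨κ, b⟩ / (∑ c : I κ × J κ, ρ ⟨κ, c⟩ ⟨κ, c⟩))) := by
  classical
  have hblock (κ : K) : (blockDiag' ρ κ).PosSemidef := hpsd.submatrix (Sigma.mk κ)
  rw [blockSep_iff_mem_convexHull]
  constructor
  · intro hρ
    exact ⟨isBlockDiagonal'_of_mem_convexHull hρ, fun κ hκ => kronSep_of_mem_hull (hblock κ)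
      (blockDiag'_mem_hull_productDensityMatrices (PointedCone.convexHull_subset_hull _ hρ) κ) hκ⟩
  · rintro ⟨hdiag, hsep⟩
    exact mem_convexHull_of_mem_hull_of_trace_eq_one
      (fun _ => trace_eq_one_of_mem_pureBlockProductStates)
      (mem_hull_pureBlockProductStates hdiag fun κ => mem_hull_of_kronSep (hblock κ) (hsep κ)) htr
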